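/- Let Δ be a traceless self-adjoint operator on m+n qubits and let Λ ⊆ [m+n] be a region of size m. Then ‖Δ‖_{W₁loc} ≥ ‖Tr_{Λᶜ}Δ‖_{W₁loc} + ‖Tr_Λ Δ‖_{W₁loc}, where the local quantum W₁ norms on the right-hand side are those of the subsystems of m and n qubits respectively (with the same penalty coefficients). In particular, for any states ρ, σ of m+n qubits, ‖ρ − σ‖_{W₁loc} ≥ ‖ρ_Λ − σ_Λ‖_{W₁loc} + ‖ρ_{Λᶜ} − σ_{Λᶜ}‖_{W₁loc}. -/

import Mathlib

open Matrix BigOperators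
open scoped ComplexOrder

noncomputable section

namespace QW1

variable {ι : Type*} [Fintype ι] [DecidableEq ι]

/-- The space of (not necessarily Hermitian) operators on a system of qubits labelled by `ι`:
matrices indexed by the computational basis `ι → Fin 2`. -/
abbrev QMat (ι : Type*) [Fintype ι] [DecidableEq ι] :=
  Matrix (ι → Fin 2) (ι → Fin 2) ℂ

/-- The operator norm (largest singular value) of a matrix. -/
noncomputable def opNorm {d : Type*} [Fintype d] [DecidableEq d] (A : Matrix d d ℂ) : ℝ :=
  ⨆ i, Real.sqrt ((Matrix.isHermitian_conjTranspose_mul_self A).eigenvalues i)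

/-- The trace norm (sum of singular values) of a matrix. -/
noncomputable def traceNorm {d : Type*} [Fintype d] [DecidableEq d] (A : Matrix d d ℂ) : ℝ :=
  ∑ i, Real.sqrt ((Matrix.isHermitian_conjTranspose_mul_self A).eigenvalues i)

/-- Combine an assignment of basis states on `Λ` and on its complement into one on all of `ι`. -/
def merge (Λ : Finset ι) (f : {x // x ∈ Λ} → Fin 2) (g : {x // x ∉ Λ} → Fin 2) (x : ι) :
    Fin 2 :=
  if h : x ∈ Λ then f ⟨x, h⟩ else g ⟨x, h⟩

/-- The partial trace over the qubits outside `Λ`, `Tr_{Λᶜ}`, yielding an operator on the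
qubits in `Λ`. -/
noncomputable def ptrace (Λ : Finset ι) (A : QMat ι) :
    Matrix ({x // x ∈ Λ} → Fin 2) ({x // x ∈ Λ} → Fin 2) ℂ :=
  fun f g => ∑ h : {x : ι // x ∉ Λ} → Fin 2, A (merge Λ f h) (merge Λ g h)

/-- The extension `M ⊗ I_{Λᶜ}` of an operator `M` on the qubits in `Λ` to all the qubits. -/
def embed (Λ : Finset ι)
    (M : Matrix ({x // x ∈ Λ} → Fin 2) ({x // x ∈ Λ} → Fin 2) ℂ) : QMat ι :=
  fun f g =>
    (if ∀ x : ι, x ∉ Λ → f x = g x then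
      M (fun x => f x.1) (fun x => g x.1) else 0)

/-- `H` acts on (at most) the qubits in `Λ`: it has the form `H_Λ ⊗ I_{Λᶜ}` with `H_Λ`
self-adjoint. -/
def ActsOn (Λ : Finset ι) (H : QMat ι) : Prop :=
  ∃ M, M.IsHermitian ∧ H = embed Λ M

/-- The local quantum norm with penalty coefficients `c`. -/
noncomputable def localNorm (c : ℕ → ℝ) (H : QMat ι) : ℝ :=
  sInf { r : ℝ | ∃ F : Finset ι → QMat ι, (∀ Λ, ActsOn Λ (F Λ)) ∧ H = ∑ Λ, F Λ ∧
    r = 2 * ⨆ x : ι, ∑ Λ ∈ Finset.univ.filter (fun Λ : Finset ι => x ∈ Λ),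
      c Λ.card * opNorm (F Λ) }

/-- The local quantum `W₁` norm: the dual of the local quantum norm. -/
noncomputable def W1loc (c : ℕ → ℝ) (Δ : QMat ι) : ℝ :=
  sSup { r : ℝ | ∃ H : QMat ι, H.IsHermitian ∧ localNorm c H ≤ 1 ∧ r = ((Δ * H).trace).re }

/-- The quantum `W₁` norm of De Palma et al. -/
noncomputable def W1 (Δ : QMat ι) : ℝ :=
  sInf { r : ℝ | ∃ D : ι → QMat ι,
    (∀ x, (D x).IsHermitian ∧ (D x).trace = 0 ∧ ptrace ({x}ᶜ : Finset ι) (D x) = 0) ∧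
    Δ = ∑ x, D x ∧ r = (1 / 2) * ∑ x, traceNorm (D x) }

/-- Tensor product of operators on two disjoint families of qubits. -/
def tensor {κ : Type*} [Fintype κ] [DecidableEq κ] (A : QMat ι) (B : QMat κ) :
    QMat (ι ⊕ κ) :=
  fun f g => A (f ∘ Sum.inl) (g ∘ Sum.inl) * B (f ∘ Sum.inr) (g ∘ Sum.inr)

/-- Tensor product of single-qubit operators, one for each qubit. -/
def tensorAll (B : ι → Matrix (Fin 2) (Fin 2) ℂ) : QMat ι :=
  fun f g => ∏ j, B j (f j) (g j)

/-- The four Pauli matrices `I, X, Y, Z`. -/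
noncomputable def pauli : Fin 4 → Matrix (Fin 2) (Fin 2) ℂ :=
  ![1, !![0, 1; 1, 0], !![0, -Complex.I; Complex.I, 0], !![1, 0; 0, -1]]

/-- The Pauli operator `σ_{a 1} ⊗ ⋯ ⊗ σ_{a n}`. -/
noncomputable def pauliOp (a : ι → Fin 4) : QMat ι :=
  tensorAll fun j => pauli (a j)

/-- The weight (locality) of a Pauli operator: the number of non-identity factors. -/
def weight (a : ι → Fin 4) : ℕ :=
  (Finset.univ.filter fun j => a j ≠ 0).card

/-- A quantum state: a positive semidefinite matrix of unit trace. (`PosSemidef` is taken with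
respect to the complex order.) -/
def IsState (ρ : QMat ι) : Prop :=
  ρ.PosSemidef ∧ ρ.trace = 1

end QW1

namespace QW1

variable {ι : Type*} [Fintype ι] [DecidableEq ι]

/-- The dependence `∂_x H` of the observable `H` on the qubit `x`. -/
noncomputable def dep (x : ι) (H : QMat ι) : ℝ :=
  2 * sInf { r : ℝ | ∃ K : QMat ι, ActsOn ({x}ᶜ : Finset ι) K ∧ r = opNorm (H - K) }

/-- The quantum Lipschitz constant `‖H‖_L = max_x ∂_x H`. -/
noncomputable def lipNorm (H : QMat ι) : ℝ :=
  ⨆ x : ι, dep x H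

/-- Single-qubit unitaries rotating the eigenbases of the Paulis `Z`, `X`, `Y`
to the computational basis. -/
noncomputable def ubasis : Fin 3 → Matrix (Fin 2) (Fin 2) ℂ :=
  ![1,
    (Real.sqrt 2 : ℂ)⁻¹ • !![1, 1; 1, -1],
    (Real.sqrt 2 : ℂ)⁻¹ • !![1, -Complex.I; 1, Complex.I]]

/-- The single-qubit classical shadow `3 U† |b⟩⟨b| U − I`. -/
noncomputable def shadow1 (w : Fin 3) (b : Fin 2) : Matrix (Fin 2) (Fin 2) ℂ :=
  (3 : ℂ) • ((ubasis w)ᴴ * Matrix.single b b 1 * ubasis w) - 1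

/-- The classical shadow `⊗_j (3 U_j† |b_j⟩⟨b_j| U_j − I)` of the Pauli measurement
primitive associated with the sampled basis choices and outcomes `s`. -/
noncomputable def shadowOf (s : ι → Fin 3 × Fin 2) : QMat ι :=
  tensorAll fun j => shadow1 (s j).1 (s j).2

/-- The probability of the sample `s` (a uniformly random Pauli basis measured on each qubit,
with outcomes distributed with the Born probability `⟨b|UρU†|b⟩`) when measuring one copy
of `ρ` in the Pauli measurement primitive. -/
noncomputable def shadowPMF (ρ : QMat ι) (s : ι → Fin 3 × Fin 2) : ℝ :=
  ((3 : ℝ) ^ Fintype.card ι)⁻¹ *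
    (((tensorAll fun j => ubasis (s j).1) * ρ * (tensorAll fun j => ubasis (s j).1)ᴴ)
      (fun j => (s j).2) (fun j => (s j).2)).re

open Classical in
/-- The probability that `N` independent classical shadows of `ρ` (from the Pauli
measurement primitive) satisfy the event `E`. -/
noncomputable def shadowProb (ρ : QMat ι) (N : ℕ)
    (E : (Fin N → ι → Fin 3 × Fin 2) → Prop) : ℝ :=
  ∑ ω : Fin N → ι → Fin 3 × Fin 2, if E ω then ∏ i, shadowPMF ρ (ω i) else 0

/-- Extension of a single-qubit operator `K` on the qubit `i`, acting as the identity on the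
remaining qubits. -/
noncomputable def oneSite (i : ι) (K : Matrix (Fin 2) (Fin 2) ℂ) : QMat ι :=
  tensorAll fun j => if j = i then K else 1

/-- Logarithm of a Hermitian matrix via its spectral decomposition (junk value otherwise). -/
noncomputable def mlog {d : Type*} [Fintype d] [DecidableEq d] (A : Matrix d d ℂ) :
    Matrix d d ℂ :=
  if hA : A.IsHermitian then
    (hA.eigenvectorUnitary : Matrix d d ℂ) *
      Matrix.diagonal (fun i => (Real.log (hA.eigenvalues i) : ℂ)) *
      star (hA.eigenvectorUnitary : Matrix d d ℂ)
  else 0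

/-- The quantum relative entropy `S(ρ‖σ) = Tr[ρ(ln ρ − ln σ)]`. -/
noncomputable def relEnt (ρ σ : QMat ι) : ℝ :=
  ((ρ * (mlog ρ - mlog σ)).trace).re

/-- The Gibbs state `e^{−H} / Tr e^{−H}`. -/
noncomputable def gibbs (H : QMat ι) : QMat ι :=
  ((NormedSpace.exp (-H)).trace)⁻¹ • NormedSpace.exp (-H)

end QW1

open QW1 Matrix Complex

/-!
Given observables `H_A` on `Λ` and `H_B` on `Λᶜ` of local norm at most one, the observable
`H = H_A ⊗ I + I ⊗ H_B` again has local norm at most one: pushing near-optimal local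
decompositions of `H_A` and `H_B` forward to the whole system, every qubit is charged only by
the decomposition of the side it lies on, and tensoring with an identity does not increase the
operator norm. Since `Tr[Δ H] = Tr[Tr_{Λᶜ}Δ · H_A] + Tr[Tr_Λ Δ · H_B]`, taking suprema over
`H_A` and `H_B` gives the superadditivity.

The supremum defining `‖Δ‖_{W₁loc}` is finite because `Δ` is traceless: the term of a
decomposition acting on the empty region is a multiple of the identity and is invisible to `Δ`,
while every other term is controlled by the penalties `c_k ≥ 1`. (Otherwise `sSup` would return
its junk value `0`.)
-/

namespace QW1

open scoped Matrix.Norms.L2Operator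

section OperatorNorm

variable {d : Type*} [Fintype d] [DecidableEq d]

theorem _root_.Matrix.IsHermitian.l2_opNorm_eq {Q : Matrix d d ℂ} (hQ : Q.IsHermitian) :
    ‖Q‖ = ‖(RCLike.ofReal ∘ hQ.eigenvalues : d → ℂ)‖ := by
  conv_lhs => rw [hQ.spectral_theorem, Unitary.conjStarAlgAut_apply]
  rw [← Unitary.coe_star, CStarRing.norm_mul_coe_unitary, CStarRing.norm_coe_unitary_mul,
    l2_opNorm_diagonal]

theorem opNorm_eq_l2_opNorm (A : Matrix d d ℂ) : opNorm A = ‖A‖ := by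
  set hQ := isHermitian_conjTranspose_mul_self A
  have hnorm : ‖(RCLike.ofReal ∘ hQ.eigenvalues : d → ℂ)‖ = ‖A‖ ^ 2 := by
    rw [← hQ.l2_opNorm_eq, l2_opNorm_conjTranspose_mul_self, sq]
  have heig : ∀ i, hQ.eigenvalues i ≤ ‖A‖ ^ 2 := fun i => by
    simpa [← hnorm, abs_of_nonneg (eigenvalues_conjTranspose_mul_self_nonneg A i)] using
      norm_le_pi_norm (RCLike.ofReal ∘ hQ.eigenvalues : d → ℂ) i
  have hle : opNorm A ≤ ‖A‖ :=
    Real.iSup_le (fun i => Real.sqrt_le_iff.mpr ⟨norm_nonneg A, heig i⟩) (norm_nonneg A)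
  have hsqrt : ∀ i, Real.sqrt (hQ.eigenvalues i) ≤ opNorm A := fun i =>
    le_ciSup (f := fun i => Real.sqrt (hQ.eigenvalues i)) (Set.finite_range _).bddAbove i
  have hge : ‖A‖ ^ 2 ≤ opNorm A ^ 2 := by
    rw [← hnorm]
    refine (pi_norm_le_iff_of_nonneg (by positivity)).mpr fun i => ?_
    have h0 := eigenvalues_conjTranspose_mul_self_nonneg A i
    calc ‖(hQ.eigenvalues i : ℂ)‖ = Real.sqrt (hQ.eigenvalues i) ^ 2 := by
          simp [Real.sq_sqrt h0, abs_of_nonneg h0]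
      _ ≤ opNorm A ^ 2 := pow_le_pow_left₀ (Real.sqrt_nonneg _) (hsqrt i) 2
  exact le_antisymm hle (pow_le_pow_iff_left₀ (norm_nonneg A)
    (Real.iSup_nonneg fun _ => Real.sqrt_nonneg _) two_ne_zero |>.mp hge)

variable {m n : Type*} [Fintype m] [Fintype n] [DecidableEq n]

theorem sum_sq_norm_mulVec_le (A : Matrix m n ℂ) (v : n → ℂ) :
    ∑ i, ‖(A *ᵥ v) i‖ ^ 2 ≤ ‖A‖ ^ 2 * ∑ j, ‖v j‖ ^ 2 := by
  have h := pow_le_pow_left₀ (norm_nonneg _) (A.l2_opNorm_mulVec (WithLp.toLp 2 v)) 2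
  simpa [EuclideanSpace.norm_sq_eq, mul_pow] using h

theorem norm_entry_le_l2_opNorm (A : Matrix m n ℂ) (i : m) (j : n) : ‖A i j‖ ≤ ‖A‖ := by
  have h := sum_sq_norm_mulVec_le A (Pi.single j 1)
  simp only [mulVec_single_one, col_apply, Pi.single_apply, apply_ite, norm_one, norm_zero,
    ite_pow, one_pow, zero_pow two_ne_zero, Finset.sum_ite_eq', Finset.mem_univ, if_true,
    mul_one] at h
  refine pow_le_pow_iff_left₀ (norm_nonneg _) (norm_nonneg _) two_ne_zero |>.mp ?_
  exact (Finset.single_le_sum (fun k _ => sq_nonneg ‖A k j‖) (Finset.mem_univ i)).trans h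

theorem norm_trace_mul_le [DecidableEq m] (Δ B : Matrix m m ℂ) :
    ‖(Δ * B).trace‖ ≤ (∑ i, ∑ j, ‖Δ i j‖) * ‖B‖ := by
  simp only [trace, diag_apply, mul_apply, Finset.sum_mul]
  refine (norm_sum_le _ _).trans (Finset.sum_le_sum fun i _ => (norm_sum_le _ _).trans ?_)
  exact Finset.sum_le_sum fun j _ => by
    rw [norm_mul]; exact mul_le_mul_of_nonneg_left (norm_entry_le_l2_opNorm B j i) (norm_nonneg _)

end OperatorNorm

section Subsystem

variable {ι : Type*} [DecidableEq ι] (Λ : Finset ι)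

@[simp]
theorem merge_apply_of_mem (f : {x // x ∈ Λ} → Fin 2) (g : {x // x ∉ Λ} → Fin 2)
    (x : {x // x ∈ Λ}) : merge Λ f g x = f x := dif_pos x.2

@[simp]
theorem merge_apply_of_notMem (f : {x // x ∈ Λ} → Fin 2) (g : {x // x ∉ Λ} → Fin 2)
    (x : {x // x ∉ Λ}) : merge Λ f g x = g x := dif_neg x.2

variable [Fintype ι]

theorem sum_merge {β : Type*} [AddCommMonoid β] (F : (ι → Fin 2) → β) :
    ∑ f, F f = ∑ g : {x // x ∉ Λ} → Fin 2, ∑ f : {x // x ∈ Λ} → Fin 2, F (merge Λ f g) := by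
  rw [← (Equiv.piEquivPiSubtypeProd (· ∈ Λ) fun _ => Fin 2).symm.sum_comp,
    Fintype.sum_prod_type, Finset.sum_comm]
  rfl

theorem embed_apply_merge (M : Matrix ({x // x ∈ Λ} → Fin 2) ({x // x ∈ Λ} → Fin 2) ℂ)
    (f₁ g₁ : {x // x ∈ Λ} → Fin 2) (f₂ g₂ : {x // x ∉ Λ} → Fin 2) :
    embed Λ M (merge Λ f₁ f₂) (merge Λ g₁ g₂) = if f₂ = g₂ then M f₁ g₁ else 0 := by
  have hoff : (∀ x, x ∉ Λ → merge Λ f₁ f₂ x = merge Λ g₁ g₂ x) ↔ f₂ = g₂ := by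
    rw [funext_iff, Subtype.forall']
    simp only [merge_apply_of_notMem]
  simp only [embed, hoff, merge_apply_of_mem]

theorem embed_add (M N : Matrix ({x // x ∈ Λ} → Fin 2) ({x // x ∈ Λ} → Fin 2) ℂ) :
    embed Λ (M + N) = embed Λ M + embed Λ N := by
  ext f g
  simp only [embed, Matrix.add_apply]
  split_ifs <;> simp

def embedAddHom : Matrix ({x // x ∈ Λ} → Fin 2) ({x // x ∈ Λ} → Fin 2) ℂ →+ QMat ι :=
  AddMonoidHom.mk' (embed Λ) (embed_add Λ)

theorem embed_sum {α : Type*} (s : Finset α)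
    (M : α → Matrix ({x // x ∈ Λ} → Fin 2) ({x // x ∈ Λ} → Fin 2) ℂ) :
    embed Λ (∑ a ∈ s, M a) = ∑ a ∈ s, embed Λ (M a) :=
  map_sum (embedAddHom Λ) M s

theorem isHermitian_embed {M : Matrix ({x // x ∈ Λ} → Fin 2) ({x // x ∈ Λ} → Fin 2) ℂ}
    (hM : M.IsHermitian) : (embed Λ M).IsHermitian := by
  ext f g
  have hsymm : (∀ x ∉ Λ, g x = f x) ↔ ∀ x ∉ Λ, f x = g x :=
    forall₂_congr fun _ _ => eq_comm
  simp only [conjTranspose_apply, embed, hsymm]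
  split_ifs
  · exact hM.apply _ _
  · exact star_zero _

theorem mulVec_embed (M : Matrix ({x // x ∈ Λ} → Fin 2) ({x // x ∈ Λ} → Fin 2) ℂ)
    (v : (ι → Fin 2) → ℂ) (f₁ : {x // x ∈ Λ} → Fin 2) (f₂ : {x // x ∉ Λ} → Fin 2) :
    (embed Λ M *ᵥ v) (merge Λ f₁ f₂) = (M *ᵥ fun g₁ => v (merge Λ g₁ f₂)) f₁ := by
  simp only [mulVec, dotProduct]
  rw [sum_merge Λ]
  simp [embed_apply_merge]

theorem trace_mul_embed (Δ : QMat ι)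
    (M : Matrix ({x // x ∈ Λ} → Fin 2) ({x // x ∈ Λ} → Fin 2) ℂ) :
    (Δ * embed Λ M).trace = (ptrace Λ Δ * M).trace := by
  simp only [trace, diag_apply, mul_apply, ptrace, Finset.sum_mul]
  rw [sum_merge Λ]
  simp only [sum_merge Λ fun g => Δ _ g * embed Λ M g _, embed_apply_merge]
  simp only [mul_ite, mul_zero, Finset.sum_comm (γ := {x // x ∉ Λ} → Fin 2),
    Finset.sum_ite_eq', Finset.mem_univ, if_true]

theorem trace_ptrace (A : QMat ι) : (ptrace Λ A).trace = A.trace := by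
  simp only [trace, diag_apply, ptrace]
  rw [sum_merge Λ, Finset.sum_comm]

theorem ptrace_sub (A B : QMat ι) : ptrace Λ (A - B) = ptrace Λ A - ptrace Λ B := by
  ext f g
  simp [ptrace, Finset.sum_sub_distrib]

theorem norm_embed_le (M : Matrix ({x // x ∈ Λ} → Fin 2) ({x // x ∈ Λ} → Fin 2) ℂ) :
    ‖embed Λ M‖ ≤ ‖M‖ := by
  rw [← l2_opNorm_toEuclideanCLM]
  refine ContinuousLinearMap.opNorm_le_bound _ (norm_nonneg M) fun v => ?_
  refine (pow_le_pow_iff_left₀ (norm_nonneg _) (by positivity) two_ne_zero).mp ?_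
  rw [EuclideanSpace.norm_sq_eq, mul_pow, EuclideanSpace.norm_sq_eq, sum_merge Λ, sum_merge Λ,
    Finset.mul_sum]
  refine Finset.sum_le_sum fun f₂ _ => ?_
  simp only [ofLp_toEuclideanCLM, mulVec_embed]
  exact sum_sq_norm_mulVec_le M _

theorem trace_mul_embed_empty {Δ : QMat ι} (hΔ : Δ.trace = 0)
    (M : Matrix ({x // x ∈ (∅ : Finset ι)} → Fin 2) ({x // x ∈ (∅ : Finset ι)} → Fin 2) ℂ) :
    (Δ * embed ∅ M).trace = 0 := by
  have h : (ptrace ∅ Δ).trace = 0 := (trace_ptrace ∅ Δ).trans hΔ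
  rw [trace_mul_embed]
  simp only [trace, diag_apply, mul_apply, Fintype.sum_unique] at h ⊢
  rw [h, zero_mul]

end Subsystem

section Locality

variable {ι : Type*} [Fintype ι] [DecidableEq ι]

theorem actsOn_zero (Λ : Finset ι) : ActsOn Λ (0 : QMat ι) :=
  ⟨0, isHermitian_zero, (map_zero (embedAddHom Λ)).symm⟩

theorem ActsOn.add {Λ : Finset ι} {H K : QMat ι} (hH : ActsOn Λ H) (hK : ActsOn Λ K) :
    ActsOn Λ (H + K) := by
  obtain ⟨M, hM, rfl⟩ := hH
  obtain ⟨N, hN, rfl⟩ := hK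
  exact ⟨M + N, hM.add hN, (embed_add Λ M N).symm⟩

theorem actsOn_sum {α : Type*} {Λ : Finset ι} {s : Finset α} {H : α → QMat ι}
    (hH : ∀ a ∈ s, ActsOn Λ (H a)) : ActsOn Λ (∑ a ∈ s, H a) :=
  Finset.sum_induction H (ActsOn Λ) (fun _ _ => ActsOn.add) (actsOn_zero Λ) hH

theorem actsOn_univ {H : QMat ι} (hH : H.IsHermitian) : ActsOn Finset.univ H := by
  refine ⟨fun f g => H (fun x => f ⟨x, Finset.mem_univ x⟩) (fun x => g ⟨x, Finset.mem_univ x⟩),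
    ?_, ?_⟩
  · ext f g
    exact hH.apply _ _
  · ext f g
    simp [embed]

theorem ActsOn.embed {Λ : Finset ι} {S : Finset {x // x ∈ Λ}} {K : QMat {x // x ∈ Λ}}
    (hK : ActsOn S K) : ActsOn (S.map (Function.Embedding.subtype _)) (embed Λ K) := by
  obtain ⟨M, hM, rfl⟩ := hK
  have hmem : ∀ x : {x // x ∈ S}, x.1.1 ∈ S.map (Function.Embedding.subtype _) :=
    fun x => Finset.mem_map_of_mem _ x.2
  refine ⟨fun f g => M (fun x => f ⟨x.1.1, hmem x⟩) (fun x => g ⟨x.1.1, hmem x⟩), ?_, ?_⟩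
  · ext f g
    exact hM.apply _ _
  · ext f g
    have hoff : ((∀ x ∉ Λ, f x = g x) ∧ ∀ x : {x // x ∈ Λ}, x ∉ S → f x = g x) ↔
        ∀ x ∉ S.map (Function.Embedding.subtype _), f x = g x := by
      refine ⟨fun ⟨hΛ, hS⟩ x hx => ?_, fun h => ⟨fun x hx => h x ?_, fun x hx => h x ?_⟩⟩
      · by_cases hxΛ : x ∈ Λ
        · exact hS ⟨x, hxΛ⟩ fun hxS => hx (Finset.mem_map_of_mem _ hxS)
        · exact hΛ x hxΛ
      · exact Finset.notMem_map_subtype_of_not_property S hx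
      · exact fun hxS => hx ((Finset.mem_map' (Function.Embedding.subtype _)).mp hxS)
    simp only [QW1.embed, ← ite_and, hoff]

def siteCost (c : ℕ → ℝ) (F : Finset ι → QMat ι) (x : ι) : ℝ :=
  ∑ Λ ∈ Finset.univ.filter (fun Λ : Finset ι => x ∈ Λ), c Λ.card * opNorm (F Λ)

theorem siteCost_add_le {c : ℕ → ℝ} (hc : ∀ T : Finset ι, T.Nonempty → 0 ≤ c T.card)
    (F G : Finset ι → QMat ι) (x : ι) :
    siteCost c (F + G) x ≤ siteCost c F x + siteCost c G x := by
  rw [siteCost, siteCost, siteCost, ← Finset.sum_add_distrib]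
  refine Finset.sum_le_sum fun T hT => ?_
  have hcT := hc T ⟨x, (Finset.mem_filter.mp hT).2⟩
  simp only [Pi.add_apply, opNorm_eq_l2_opNorm, ← mul_add]
  exact mul_le_mul_of_nonneg_left (norm_add_le _ _) hcT

variable (Λ : Finset ι)

/-- The fibre summed over has at most one element, the preimage of `T` when `T ⊆ Λ`; the sum
spares a case split. -/
def pushForward (FA : Finset {x // x ∈ Λ} → QMat {x // x ∈ Λ}) (T : Finset ι) : QMat ι :=
  ∑ S ∈ Finset.univ.filter (fun S => S.map (Function.Embedding.subtype _) = T), embed Λ (FA S)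

variable {Λ} (FA : Finset {x // x ∈ Λ} → QMat {x // x ∈ Λ})

theorem sum_pushForward : ∑ T, pushForward Λ FA T = embed Λ (∑ S, FA S) := by
  rw [embed_sum]
  exact Finset.sum_fiberwise _ _ _

theorem actsOn_pushForward (hFA : ∀ S, ActsOn S (FA S)) (T : Finset ι) :
    ActsOn T (pushForward Λ FA T) :=
  actsOn_sum fun S hS => (Finset.mem_filter.mp hS).2 ▸ (hFA S).embed

theorem pushForward_eq_zero {T : Finset ι} (hT : ¬T ⊆ Λ) : pushForward Λ FA T = 0 := by
  refine Finset.sum_eq_zero fun S hS => absurd ?_ hT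
  rw [← (Finset.mem_filter.mp hS).2]
  exact fun x hx => Finset.property_of_mem_map_subtype S hx

theorem siteCost_pushForward_of_notMem (c : ℕ → ℝ) {x : ι} (hx : x ∉ Λ) :
    siteCost c (pushForward Λ FA) x = 0 := by
  refine Finset.sum_eq_zero fun T hT => ?_
  rw [pushForward_eq_zero FA fun h => hx (h (Finset.mem_filter.mp hT).2), opNorm_eq_l2_opNorm,
    norm_zero, mul_zero]

theorem siteCost_pushForward_le_of_mem {c : ℕ → ℝ}
    (hc : ∀ T : Finset ι, T.Nonempty → 0 ≤ c T.card) {x : ι} (hx : x ∈ Λ) :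
    siteCost c (pushForward Λ FA) x ≤ siteCost c FA ⟨x, hx⟩ := by
  let lift : Finset {x // x ∈ Λ} → Finset ι := Finset.map (Function.Embedding.subtype _)
  have hfiber : ∀ T ∈ Finset.univ.filter (fun T : Finset ι => x ∈ T),
      c T.card * ‖pushForward Λ FA T‖ ≤
        ∑ S ∈ Finset.univ.filter (fun S => lift S = T), c S.card * ‖FA S‖ := by
    intro T hT
    have hcT := hc T ⟨x, (Finset.mem_filter.mp hT).2⟩
    calc c T.card * ‖pushForward Λ FA T‖
        ≤ c T.card * ∑ S ∈ Finset.univ.filter (fun S => lift S = T), ‖FA S‖ :=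
          mul_le_mul_of_nonneg_left ((norm_sum_le _ _).trans
            (Finset.sum_le_sum fun S _ => norm_embed_le Λ (FA S))) hcT
      _ = ∑ S ∈ Finset.univ.filter (fun S => lift S = T), c S.card * ‖FA S‖ := by
          rw [Finset.mul_sum]
          refine Finset.sum_congr rfl fun S hS => ?_
          rw [← (Finset.mem_filter.mp hS).2, Finset.card_map]
  calc siteCost c (pushForward Λ FA) x
      ≤ ∑ T ∈ Finset.univ.filter (fun T : Finset ι => x ∈ T),
          ∑ S ∈ Finset.univ.filter (fun S => lift S = T), c S.card * ‖FA S‖ := by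
        simp only [siteCost, opNorm_eq_l2_opNorm]
        exact Finset.sum_le_sum hfiber
    _ = siteCost c FA ⟨x, hx⟩ := by
        rw [Finset.sum_fiberwise_eq_sum_filter]
        simp only [siteCost, opNorm_eq_l2_opNorm]
        refine Finset.sum_congr (Finset.filter_congr fun S _ => ?_) fun _ _ => rfl
        simp [lift, hx]

end Locality

theorem forall_nonempty_card_subtype {α : Type*} {p : α → Prop} {P : ℕ → Prop}
    (h : ∀ T : Finset α, T.Nonempty → P T.card) (S : Finset {x // p x}) (hS : S.Nonempty) :
    P S.card := by
  simpa using h (S.map (Function.Embedding.subtype p)) (hS.map)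

section LocalNorm

variable {ι : Type*} [Fintype ι] [DecidableEq ι] {c : ℕ → ℝ}

theorem siteCost_nonneg (hc : ∀ T : Finset ι, T.Nonempty → 0 ≤ c T.card)
    (F : Finset ι → QMat ι) (x : ι) : 0 ≤ siteCost c F x :=
  Finset.sum_nonneg fun T hT => mul_nonneg (hc T ⟨x, (Finset.mem_filter.mp hT).2⟩)
    (opNorm_eq_l2_opNorm (F T) ▸ norm_nonneg _)

theorem sum_siteCost (F : Finset ι → QMat ι) :
    ∑ x, siteCost c F x = ∑ T, T.card * (c T.card * opNorm (F T)) := by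
  simp only [siteCost, Finset.sum_filter]
  rw [Finset.sum_comm]
  refine Finset.sum_congr rfl fun T _ => ?_
  rw [Finset.sum_ite_mem, Finset.univ_inter, Finset.sum_const, nsmul_eq_mul]

theorem localNorm_eq_sInf (H : QMat ι) :
    localNorm c H = sInf {r | ∃ F : Finset ι → QMat ι, (∀ Λ, ActsOn Λ (F Λ)) ∧
      H = ∑ Λ, F Λ ∧ r = 2 * ⨆ x, siteCost c F x} := rfl

theorem localNorm_nonneg (hc : ∀ T : Finset ι, T.Nonempty → 0 ≤ c T.card) (H : QMat ι) :
    0 ≤ localNorm c H := by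
  rw [localNorm_eq_sInf]
  refine Real.sInf_nonneg ?_
  rintro _ ⟨F, -, -, rfl⟩
  exact mul_nonneg zero_le_two (Real.iSup_nonneg (siteCost_nonneg hc F))

theorem localNorm_le_of_decomp (hc : ∀ T : Finset ι, T.Nonempty → 0 ≤ c T.card)
    {H : QMat ι} {F : Finset ι → QMat ι} (hF : ∀ Λ, ActsOn Λ (F Λ)) (hH : H = ∑ Λ, F Λ) :
    localNorm c H ≤ 2 * ⨆ x, siteCost c F x := by
  rw [localNorm_eq_sInf]
  refine csInf_le ⟨0, ?_⟩ ⟨F, hF, hH, rfl⟩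
  rintro _ ⟨G, -, -, rfl⟩
  exact mul_nonneg zero_le_two (Real.iSup_nonneg (siteCost_nonneg hc G))

theorem exists_decomp_of_localNorm_lt {H : QMat ι} (hH : H.IsHermitian) {r : ℝ}
    (h : localNorm c H < r) :
    ∃ F : Finset ι → QMat ι, (∀ Λ, ActsOn Λ (F Λ)) ∧ H = ∑ Λ, F Λ ∧
      ∀ x, 2 * siteCost c F x < r := by
  have htrivial : ∀ Λ, ActsOn Λ (if Λ = Finset.univ then H else 0) := fun Λ => by
    split_ifs with hΛ
    · exact hΛ ▸ actsOn_univ hH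
    · exact actsOn_zero Λ
  rw [localNorm_eq_sInf] at h
  obtain ⟨_, ⟨F, hF, hHF, rfl⟩, hlt⟩ :=
    exists_lt_of_csInf_lt (by exact ⟨_, _, htrivial, by simp, rfl⟩) h
  refine ⟨F, hF, hHF, fun x => lt_of_le_of_lt ?_ hlt⟩
  gcongr
  exact le_ciSup (f := siteCost c F) (Set.finite_range _).bddAbove x

theorem localNorm_zero_nonpos (hc : ∀ T : Finset ι, T.Nonempty → 0 ≤ c T.card) :
    localNorm c (0 : QMat ι) ≤ 0 := by
  refine (localNorm_le_of_decomp hc (fun Λ => actsOn_zero Λ) (F := 0) (by simp)).trans ?_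
  refine mul_nonpos_of_nonneg_of_nonpos zero_le_two (Real.iSup_le (fun x => ?_) le_rfl)
  simp [siteCost, opNorm_eq_l2_opNorm]

theorem localNorm_embed_add_embed_le (hc : ∀ T : Finset ι, T.Nonempty → 0 ≤ c T.card)
    (Λ : Finset ι) {HA : QMat {x // x ∈ Λ}} {HB : QMat {x // x ∈ Λᶜ}}
    (hHA : HA.IsHermitian) (hHB : HB.IsHermitian) :
    localNorm c (embed Λ HA + embed Λᶜ HB) ≤ max (localNorm c HA) (localNorm c HB) := by
  refine le_of_forall_gt_imp_ge_of_dense fun r hr => ?_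
  have hr0 : 0 ≤ r :=
    (localNorm_nonneg (forall_nonempty_card_subtype (P := (0 ≤ c ·)) hc) HA).trans
      ((le_max_left _ _).trans hr.le)
  obtain ⟨FA, hFA, rfl, hA⟩ := exists_decomp_of_localNorm_lt hHA ((le_max_left _ _).trans_lt hr)
  obtain ⟨FB, hFB, rfl, hB⟩ := exists_decomp_of_localNorm_lt hHB ((le_max_right _ _).trans_lt hr)
  have hsite : ∀ x, siteCost c (pushForward Λ FA + pushForward Λᶜ FB) x ≤ r / 2 := by
    intro x
    refine (siteCost_add_le hc _ _ x).trans ?_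
    by_cases hx : x ∈ Λ
    · rw [siteCost_pushForward_of_notMem FB c (Finset.notMem_compl.mpr hx)]
      linarith [siteCost_pushForward_le_of_mem FA hc hx, hA ⟨x, hx⟩]
    · have hx' : x ∈ Λᶜ := Finset.mem_compl.mpr hx
      rw [siteCost_pushForward_of_notMem FA c hx]
      linarith [siteCost_pushForward_le_of_mem FB hc hx', hB ⟨x, hx'⟩]
  calc localNorm c (embed Λ (∑ S, FA S) + embed Λᶜ (∑ S, FB S))
      ≤ 2 * ⨆ x, siteCost c (pushForward Λ FA + pushForward Λᶜ FB) x :=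
        localNorm_le_of_decomp hc
          (fun T => (actsOn_pushForward FA hFA T).add (actsOn_pushForward FB hFB T))
          (by simp only [Pi.add_apply, Finset.sum_add_distrib, sum_pushForward])
    _ ≤ r := by linarith [Real.iSup_le hsite (by linarith)]

end LocalNorm

section W1loc

variable {ι : Type*} [Fintype ι] [DecidableEq ι] {c : ℕ → ℝ}

theorem W1loc_le (hc : ∀ T : Finset ι, T.Nonempty → 0 ≤ c T.card) {Δ : QMat ι} {r : ℝ}
    (h : ∀ H : QMat ι, H.IsHermitian → localNorm c H ≤ 1 → ((Δ * H).trace).re ≤ r) :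
    W1loc c Δ ≤ r := by
  refine csSup_le
    ⟨0, 0, isHermitian_zero, (localNorm_zero_nonpos hc).trans zero_le_one, by simp⟩ ?_
  rintro _ ⟨H, hH, hloc, rfl⟩
  exact h H hH hloc

theorem re_trace_mul_le_of_localNorm_le_one (hc : ∀ T : Finset ι, T.Nonempty → 1 ≤ c T.card)
    {Δ H : QMat ι} (hΔ : Δ.trace = 0) (hH : H.IsHermitian) (hloc : localNorm c H ≤ 1) :
    ((Δ * H).trace).re ≤ (∑ f, ∑ g, ‖Δ f g‖) * Fintype.card ι := by
  obtain ⟨F, hF, rfl, hsite⟩ := exists_decomp_of_localNorm_lt hH (hloc.trans_lt one_lt_two)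
  set C := ∑ f, ∑ g, ‖Δ f g‖
  have hC : 0 ≤ C := by positivity
  have hterm : ∀ T, ((Δ * F T).trace).re ≤ C * (T.card * (c T.card * opNorm (F T))) := by
    intro T
    rw [opNorm_eq_l2_opNorm]
    rcases T.eq_empty_or_nonempty with rfl | hT
    · obtain ⟨M, -, hM⟩ := hF ∅
      simp [hM, trace_mul_embed_empty hΔ]
    · have hcard : 1 ≤ T.card * c T.card :=
        one_le_mul_of_one_le_of_one_le (by exact_mod_cast hT.card_pos) (hc T hT)
      calc ((Δ * F T).trace).re ≤ C * ‖F T‖ :=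
            (Complex.re_le_norm _).trans (norm_trace_mul_le _ _)
        _ ≤ C * (T.card * (c T.card * ‖F T‖)) := by
          have := mul_le_mul_of_nonneg_left (le_mul_of_one_le_left (norm_nonneg (F T)) hcard) hC
          linarith
  calc ((Δ * ∑ T, F T).trace).re = ∑ T, ((Δ * F T).trace).re := by
        rw [Matrix.mul_sum, trace_sum, Complex.re_sum]
    _ ≤ C * ∑ x, siteCost c F x := by
        rw [sum_siteCost, Finset.mul_sum]
        exact Finset.sum_le_sum fun T _ => hterm T
    _ ≤ C * Fintype.card ι := by
        refine mul_le_mul_of_nonneg_left ?_ hC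
        calc ∑ x, siteCost c F x ≤ ∑ _x : ι, (1 : ℝ) :=
              Finset.sum_le_sum fun x _ => by linarith [hsite x]
          _ = Fintype.card ι := by simp

theorem re_trace_mul_le_W1loc (hc : ∀ T : Finset ι, T.Nonempty → 1 ≤ c T.card)
    {Δ H : QMat ι} (hΔ : Δ.trace = 0) (hH : H.IsHermitian) (hloc : localNorm c H ≤ 1) :
    ((Δ * H).trace).re ≤ W1loc c Δ := by
  refine le_csSup ⟨(∑ f, ∑ g, ‖Δ f g‖) * Fintype.card ι, ?_⟩ ⟨H, hH, hloc, rfl⟩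
  rintro _ ⟨K, hK, hlocK, rfl⟩
  exact re_trace_mul_le_of_localNorm_le_one hc hΔ hK hlocK

end W1loc

theorem W1loc_ptrace_add_W1loc_ptrace_compl_le {ι : Type*} [Fintype ι] [DecidableEq ι]
    {c : ℕ → ℝ} (hc : ∀ T : Finset ι, T.Nonempty → 1 ≤ c T.card) (Λ : Finset ι) {Δ : QMat ι}
    (hΔ : Δ.trace = 0) :
    W1loc c (ptrace Λ Δ) + W1loc c (ptrace Λᶜ Δ) ≤ W1loc c Δ := by
  have hc0 : ∀ T : Finset ι, T.Nonempty → 0 ≤ c T.card := fun T hT => zero_le_one.trans (hc T hT)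
  suffices h : ∀ HA : QMat {x // x ∈ Λ}, HA.IsHermitian → localNorm c HA ≤ 1 →
      W1loc c (ptrace Λᶜ Δ) ≤ W1loc c Δ - ((ptrace Λ Δ * HA).trace).re by
    have := W1loc_le (forall_nonempty_card_subtype (P := (0 ≤ c ·)) hc0)
      fun HA hHA hlocA => le_sub_comm.mp (h HA hHA hlocA)
    linarith
  intro HA hHA hlocA
  refine W1loc_le (forall_nonempty_card_subtype (P := (0 ≤ c ·)) hc0) fun HB hHB hlocB => ?_
  have hH := re_trace_mul_le_W1loc hc hΔ
    ((isHermitian_embed Λ hHA).add (isHermitian_embed Λᶜ hHB))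
    ((localNorm_embed_add_embed_le hc0 Λ hHA hHB).trans (max_le hlocA hlocB))
  rw [Matrix.mul_add, trace_add, trace_mul_embed, trace_mul_embed, Complex.add_re] at hH
  linarith

end QW1

theorem stmt5_general {m n : ℕ} (c : ℕ → ℝ) (hc1 : c 1 = 1)
    (hcmono : ∀ k l, 1 ≤ k → k ≤ l → l ≤ m + n → c k ≤ c l)
    (Λ : Finset (Fin (m + n)))
    (Δ : QMat (Fin (m + n))) (hΔtr : Δ.trace = 0) :
    W1loc c (ptrace Λ Δ) + W1loc c (ptrace Λᶜ Δ) ≤ W1loc c Δ ∧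
    ∀ ρ σ : QMat (Fin (m + n)), IsState ρ → IsState σ →
      W1loc c (ptrace Λ ρ - ptrace Λ σ) + W1loc c (ptrace Λᶜ ρ - ptrace Λᶜ σ) ≤
        W1loc c (ρ - σ) := by
  have hc : ∀ T : Finset (Fin (m + n)), T.Nonempty → 1 ≤ c T.card := fun T hT =>
    hc1 ▸ hcmono 1 T.card le_rfl hT.card_pos (by simpa using T.card_le_univ)
  refine ⟨W1loc_ptrace_add_W1loc_ptrace_compl_le hc Λ hΔtr, fun ρ σ hρ hσ => ?_⟩
  have hρσ : (ρ - σ).trace = 0 := by rw [trace_sub, hρ.2, hσ.2, sub_self]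
  simpa only [ptrace_sub] using W1loc_ptrace_add_W1loc_ptrace_compl_le hc Λ hρσ

/-- Superadditivity of the local quantum `W₁` norm with respect to the
composition of quantum systems: `‖Δ‖_{W₁loc} ≥ ‖Tr_{Λᶜ}Δ‖_{W₁loc} + ‖Tr_Λ Δ‖_{W₁loc}`
for a region `Λ` of size `m` in an `(m+n)`-qubit system; in particular for differences
of states. -/
theorem stmt5 {m n : ℕ} (c : ℕ → ℝ) (hc1 : c 1 = 1)
    (hcmono : ∀ k l, 1 ≤ k → k ≤ l → l ≤ m + n → c k ≤ c l)
    (Λ : Finset (Fin (m + n))) (hΛ : Λ.card = m)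
    (Δ : QMat (Fin (m + n))) (hΔ : Δ.IsHermitian) (hΔtr : Δ.trace = 0) :
    W1loc c (ptrace Λ Δ) + W1loc c (ptrace Λᶜ Δ) ≤ W1loc c Δ ∧
    ∀ ρ σ : QMat (Fin (m + n)), IsState ρ → IsState σ →
      W1loc c (ptrace Λ ρ - ptrace Λ σ) + W1loc c (ptrace Λᶜ ρ - ptrace Λᶜ σ) ≤
        W1loc c (ρ - σ) :=
  stmt5_general c hc1 hcmono Λ Δ hΔtr
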